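/- arXiv:2203.02774 — 6 statements merged into one kernel-verified Lean document; each statement's English description precedes it below -/
import Mathlib

section
/- If a matrix A ∈ ℝ^{M×N} satisfies the complement property (for every subset S of its rows, either the rows in S or the rows in the complement of S span ℝ^N), then the map x ↦ |Ax| (entrywise absolute value) is injective on ℝ^N up to global sign: if |Ax| = |Ay| then y = x or y = -x. -/
open Finset

/-- The complement property: for every subset `S` of the rows of `A`, either the rows
in `S` or the rows in the complement of `S` span `ℝ^N`. -/
def ComplementProperty {M N : ℕ} (A : Matrix (Fin M) (Fin N) ℝ) : Prop :=
  ∀ S : Finset (Fin M),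
    Submodule.span ℝ (A '' (S : Set (Fin M))) = ⊤ ∨
    Submodule.span ℝ (A '' ((Sᶜ : Finset (Fin M)) : Set (Fin M))) = ⊤

open Matrix in
theorem complement_property_implies_injective_up_to_sign
    {M N : ℕ} (A : Matrix (Fin M) (Fin N) ℝ)
    (hA : ComplementProperty A) (x y : Fin N → ℝ)
    (h : ∀ i : Fin M, |A.mulVec x i| = |A.mulVec y i|) :
    y = x ∨ y = -x := by
  classical
  -- the linear functional w ↦ w ⬝ᵥ v
  have key : ∀ (s : Set (Fin N → ℝ)) (v : Fin N → ℝ),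
      Submodule.span ℝ s = ⊤ → (∀ w ∈ s, w ⬝ᵥ v = 0) → v = 0 := by
    intro s v hs hv
    let f : (Fin N → ℝ) →ₗ[ℝ] ℝ :=
      { toFun := fun w => w ⬝ᵥ v
        map_add' := fun a b => add_dotProduct a b v
        map_smul' := fun c a => smul_dotProduct c a v }
    have hle : Submodule.span ℝ s ≤ LinearMap.ker f :=
      Submodule.span_le.mpr fun w hw => LinearMap.mem_ker.mpr (hv w hw)
    have : f v = 0 := hle (hs ▸ Submodule.mem_top)
    exact dotProduct_self_eq_zero.mp this
  set S : Finset (Fin M) := {i | A.mulVec x i = A.mulVec y i} with hS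
  rcases hA S with hsp | hsp
  · left
    have hv : ∀ w ∈ A '' (S : Set (Fin M)), w ⬝ᵥ (y - x) = 0 := by
      rintro w ⟨i, hi, rfl⟩
      have hi' : A.mulVec x i = A.mulVec y i := by
        simpa [hS] using hi
      have : A i ⬝ᵥ (y - x) = A.mulVec y i - A.mulVec x i := by
        simp [Matrix.mulVec, dotProduct_sub]
      rw [this, hi', sub_self]
    have := key _ _ hsp hv
    ext j
    have := congrFun this j
    simpa [sub_eq_zero] using this
  · right
    have hv : ∀ w ∈ A '' ((Sᶜ : Finset (Fin M)) : Set (Fin M)), w ⬝ᵥ (y + x) = 0 := by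
      rintro w ⟨i, hi, rfl⟩
      have hi' : ¬ (A.mulVec x i = A.mulVec y i) := by
        simpa [hS] using hi
      have habs := (abs_eq_abs.mp (h i)).resolve_left (fun hh => hi' hh)
      have : A i ⬝ᵥ (y + x) = A.mulVec y i + A.mulVec x i := by
        simp [Matrix.mulVec, dotProduct_add]
      rw [this, habs]; ring
    have := key _ _ hsp hv
    ext j
    have := congrFun this j
    have : y j + x j = 0 := by simpa using this
    simp [Pi.neg_apply]
    linarith
end

section
/- If a matrix A ∈ ℝ^{M×N} does not satisfy the complement property, then there exist vectors x, y ∈ ℝ^N with y ≠ x and y ≠ -x such that |Ax| = |Ay| entrywise. -/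
/-!
If the complement property fails for `S`, pick `u ≠ 0` orthogonal to the rows indexed by `S` and
`v ≠ 0` orthogonal to the remaining rows. On a row in `S` the entries of `A(u + v)` and
`A(u - v)` are `±(Av)ᵢ`, on any other row both are `(Au)ᵢ`; and `u - v ≠ ±(u + v)`.
-/

open Finset

open Matrix

theorem Matrix.exists_ne_zero_forall_dotProduct_eq_zero {K n : Type*} [Field K] [Fintype n]
    [DecidableEq n] {s : Set (n → K)} (hs : Submodule.span K s ≠ ⊤) :
    ∃ u : n → K, u ≠ 0 ∧ ∀ w ∈ s, w ⬝ᵥ u = 0 := by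
  obtain ⟨f, hf, hsf⟩ := (Submodule.span K s).exists_le_ker_of_lt_top hs.lt_top
  refine ⟨(dotProductEquiv K n).symm f, by simpa using hf, fun w hw => ?_⟩
  rw [dotProduct_comm, ← dotProductEquiv_apply_apply, LinearEquiv.apply_symm_apply]
  exact hsf (Submodule.subset_span hw)

theorem Matrix.abs_dotProduct_add_eq_abs_dotProduct_sub {R n : Type*} [CommRing R]
    [LinearOrder R] [IsOrderedRing R] [Fintype n] {a u v : n → R}
    (h : a ⬝ᵥ u = 0 ∨ a ⬝ᵥ v = 0) :
    |a ⬝ᵥ (u + v)| = |a ⬝ᵥ (u - v)| := by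
  rcases h with h | h <;> simp [dotProduct_add, dotProduct_sub, h]

theorem not_complement_property_implies_ambiguity
    {M N : ℕ} (A : Matrix (Fin M) (Fin N) ℝ)
    (hA : ¬ ComplementProperty A) :
    ∃ x y : Fin N → ℝ, y ≠ x ∧ y ≠ -x ∧
      ∀ i : Fin M, |A.mulVec x i| = |A.mulVec y i| := by
  obtain ⟨S, hS, hSc⟩ : ∃ S : Finset (Fin M),
      Submodule.span ℝ (A '' (S : Set (Fin M))) ≠ ⊤ ∧
      Submodule.span ℝ (A '' ((Sᶜ : Finset (Fin M)) : Set (Fin M))) ≠ ⊤ := by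
    simpa [ComplementProperty, not_or] using hA
  obtain ⟨u, hu, hSu⟩ := exists_ne_zero_forall_dotProduct_eq_zero hS
  obtain ⟨v, hv, hScv⟩ := exists_ne_zero_forall_dotProduct_eq_zero hSc
  refine ⟨u + v, u - v, ?_, ?_, fun i => abs_dotProduct_add_eq_abs_dotProduct_sub ?_⟩
  · simpa [sub_eq_add_neg, neg_eq_self] using hv
  · rw [neg_add, sub_eq_add_neg]
    simpa [self_eq_neg] using hu
  · by_cases hi : i ∈ S
    · exact .inl (hSu _ (Set.mem_image_of_mem A hi))
    · exact .inr (hScv _ (Set.mem_image_of_mem A (by simpa using hi)))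
end

section
/- If M < 2N - 1, then no matrix A ∈ ℝ^{M×N} satisfies the complement property. -/
/-
Fewer than `N` vectors cannot span `ℝ^N`, so every set `S` of rows or its complement has at
least `N` elements; splitting the rows into `N - 1` and `M - (N - 1)` then forces `M ≥ 2N - 1`.
-/

open Finset

theorem Submodule.span_image_finset_ne_top_of_card_lt_finrank {R V ι : Type*} [Ring R]
    [StrongRankCondition R] [AddCommGroup V] [Module R V] (f : ι → V) {T : Finset ι}
    (hT : #T < Module.finrank R V) : Submodule.span R (f '' (T : Set ι)) ≠ ⊤ := by
  intro hspan
  rw [Set.image_eq_range] at hspan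
  have := finrank_le_of_span_eq_top hspan
  simp only [Finset.coe_sort_coe, Fintype.card_coe] at this
  omega

namespace ComplementProperty

variable {M N : ℕ} {A : Matrix (Fin M) (Fin N) ℝ}

theorem le_card_or_le_card_compl (hA : ComplementProperty A) (S : Finset (Fin M)) :
    N ≤ #S ∨ N ≤ #Sᶜ := by
  by_contra! hsmall
  rcases hA S with hS | hSc
  · exact Submodule.span_image_finset_ne_top_of_card_lt_finrank A (by simpa using hsmall.1) hS
  · exact Submodule.span_image_finset_ne_top_of_card_lt_finrank A (by simpa using hsmall.2) hSc

theorem two_mul_sub_one_le (hA : ComplementProperty A) : 2 * N - 1 ≤ M := by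
  obtain ⟨S, -, hS⟩ := exists_subset_card_eq (s := (univ : Finset (Fin M)))
    (n := min (N - 1) M) (by simp)
  have hsplit := hA.le_card_or_le_card_compl S
  rw [card_compl, Fintype.card_fin, hS] at hsplit
  omega

end ComplementProperty

theorem no_complement_property_of_few_measurements_general
    {M N : ℕ} (hM : M < 2 * N - 1)
    (A : Matrix (Fin M) (Fin N) ℝ) :
    ¬ ComplementProperty A :=
  fun hA => hM.not_ge hA.two_mul_sub_one_le

theorem no_complement_property_of_few_measurements
    {M N : ℕ} (hN : 1 ≤ N) (hM : M < 2 * N - 1)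
    (A : Matrix (Fin M) (Fin N) ℝ) :
    ¬ ComplementProperty A :=
  no_complement_property_of_few_measurements_general hM A
end

section
/- If M < 2N - 1, then for every matrix A ∈ ℝ^{M×N} there exist vectors x, y ∈ ℝ^N with y ≠ x and y ≠ -x such that |Ax| = |Ay| entrywise. -/
open Finset

lemma aux_ker {N k : ℕ} (hk : k < N) (B : Matrix (Fin k) (Fin N) ℝ) :
    ∃ u : Fin N → ℝ, u ≠ 0 ∧ B.mulVec u = 0 := by
  by_contra h
  push_neg at h
  have hinj : Function.Injective B.mulVecLin := by
    rw [← LinearMap.ker_eq_bot, LinearMap.ker_eq_bot']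
    intro u hu
    by_contra hu0
    exact (h u hu0) hu
  have := LinearMap.finrank_le_finrank_of_injective hinj
  simp [Module.finrank_pi] at this
  omega

theorem ambiguity_of_few_measurements
    {M N : ℕ} (hN : 1 ≤ N) (hM : M < 2 * N - 1)
    (A : Matrix (Fin M) (Fin N) ℝ) :
    ∃ x y : Fin N → ℝ, y ≠ x ∧ y ≠ -x ∧
      ∀ i : Fin M, |A.mulVec x i| = |A.mulVec y i| := by
  set k := min M (N - 1) with hk
  have hkM : k ≤ M := min_le_left _ _
  have hkN : k < N := by omega
  have hMkN : M - k < N := by omega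
  obtain ⟨u, hu0, hu⟩ := aux_ker hkN (fun (i : Fin k) j => A ⟨i, by omega⟩ j)
  obtain ⟨v, hv0, hv⟩ := aux_ker hMkN (fun (i : Fin (M - k)) j => A ⟨k + i, by omega⟩ j)
  refine ⟨u + v, u - v, ?_, ?_, ?_⟩
  · intro h
    apply hv0
    have : (2 : ℝ) • v = 0 := by
      have := sub_eq_zero.mpr h
      funext j
      have := congrFun this j
      simp at this ⊢
      linarith
    simpa using this
  · intro h
    apply hu0
    have : (2 : ℝ) • u = 0 := by
      funext j
      have := congrFun h j
      simp at this ⊢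
      linarith
    simpa using this
  · intro i
    rw [Matrix.mulVec_add, Matrix.mulVec_sub]
    by_cases hik : (i : ℕ) < k
    · have : A.mulVec u i = 0 := by
        have := congrFun hu ⟨i, hik⟩
        simpa [Matrix.mulVec, dotProduct, Fin.eta] using this
      simp [Pi.add_apply, Pi.sub_apply, this, abs_neg]
    · have : A.mulVec v i = 0 := by
        have hlt : (i : ℕ) - k < M - k := by omega
        have := congrFun hv ⟨(i : ℕ) - k, hlt⟩
        have heq : (⟨k + ((i : ℕ) - k), by omega⟩ : Fin M) = i := by
          ext; simp; omega
        simpa [Matrix.mulVec, dotProduct, heq] using this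
      simp [Pi.add_apply, Pi.sub_apply, this]
end

section
/- For the binary indicator vectors of S = {0,1,3,4} and S' = {0,1,2,5} in ℝ^8, the periodic autocorrelations coincide: a_{1_S} = a_{1_{S'}}, yet 1_{S'} is not equal to ±σ·1_S for any cyclic shift or reflection σ. -/
open Finset

/-- Periodic autocorrelation of a real signal indexed by `ℤ/8`. -/
def pac (x : ZMod 8 → ℝ) (ℓ : ZMod 8) : ℝ :=
  ∑ n : ZMod 8, x n * x (n + ℓ)

lemma pac_indicator (T : Finset (ZMod 8)) (ℓ : ZMod 8) :
    pac (fun n => if n ∈ T then 1 else 0) ℓ =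
      ((univ.filter (fun n => n ∈ T ∧ n + ℓ ∈ T)).card : ℝ) := by
  unfold pac
  rw [← Finset.sum_boole]
  apply Finset.sum_congr rfl
  intro n _
  by_cases h1 : n ∈ T <;> by_cases h2 : n + ℓ ∈ T <;> simp [h1, h2]

lemma iff_of_indicator_eq {p q : Prop} [Decidable p] [Decidable q]
    (h : (if p then (1 : ℝ) else 0) = 1 * (if q then 1 else 0)) : p ↔ q := by
  split_ifs at h <;> norm_num at h <;> tauto

theorem indicator_same_autocorrelation_not_equivalent :
    let S : Finset (ZMod 8) := {0, 1, 3, 4}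
    let S' : Finset (ZMod 8) := {0, 1, 2, 5}
    let x : ZMod 8 → ℝ := fun n => if n ∈ S then 1 else 0
    let y : ZMod 8 → ℝ := fun n => if n ∈ S' then 1 else 0
    pac y = pac x ∧
    ¬ ∃ (ε : ℝ) (k : ZMod 8), (ε = 1 ∨ ε = -1) ∧
        ((∀ n, y n = ε * x (n + k)) ∨ (∀ n, y n = ε * x (-n + k))) := by
  intro S S' x y
  constructor
  · funext ℓ
    rw [show y = (fun n => if n ∈ S' then 1 else 0) from rfl,
        show x = (fun n => if n ∈ S then 1 else 0) from rfl,
        pac_indicator, pac_indicator]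
    norm_cast
    revert ℓ
    decide
  · rintro ⟨ε, k, (rfl | rfl), h | h⟩
    · exact absurd ⟨k, fun n => iff_of_indicator_eq (h n)⟩
        (by decide : ¬ ∃ k : ZMod 8, ∀ n : ZMod 8, n ∈ S' ↔ n + k ∈ S)
    · exact absurd ⟨k, fun n => iff_of_indicator_eq (h n)⟩
        (by decide : ¬ ∃ k : ZMod 8, ∀ n : ZMod 8, n ∈ S' ↔ -n + k ∈ S)
    · have h0 := h 0
      simp only [y, x, S, S', zero_add] at h0
      norm_num at h0
      split_ifs at h0 <;> norm_num at h0
    · have h0 := h 0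
      simp only [y, x, S, S', neg_zero, zero_add] at h0
      norm_num at h0
      split_ifs at h0 <;> norm_num at h0
end

section
/- The four vectors x₁ = (9/2, 9, 1/2, 1), x₂ = (3/2, 3+4i, 3/2+8i, 3), x₃ = (3/2, 3-4i, 3/2-8i, 3), x₄ = (9, 9/2, 1, 1/2) in ℂ⁴ all have the same Fourier intensity function: |x̂₁(ω)|² = |x̂₂(ω)|² = |x̂₃(ω)|² = |x̂₄(ω)|² for all ω on the unit circle. -/
/-!
Each of `x̂₂, x̂₃, x̂₄` arises from `x̂₁ = (ω + 1/2)(ω - 3i)(ω + 3i)` by reflecting one root `a`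
in the unit circle, i.e. by replacing the factor `ω - a` with `1 - conj a · ω` (up to a
unimodular constant). On the unit circle the two factors have the same modulus, because
`1 - c ω = ω · conj (ω - conj c)` when `ω · conj ω = 1`.
-/

open Complex ComplexConjugate

theorem norm_one_sub_mul_eq_norm_sub_conj {ω : ℂ} (hω : ‖ω‖ = 1) (c : ℂ) :
    ‖1 - c * ω‖ = ‖ω - conj c‖ := by
  have hunit : ω * conj ω = 1 := by
    rw [mul_conj, normSq_eq_norm_sq, hω]
    norm_num
  calc ‖1 - c * ω‖ = ‖ω * conj (ω - conj c)‖ := by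
        rw [map_sub, conj_conj, mul_sub, hunit, mul_comm c]
    _ = ‖ω - conj c‖ := by rw [norm_mul, hω, one_mul, RCLike.norm_conj]

theorem four_vectors_same_fourier_intensity :
    let f : (Fin 4 → ℂ) → ℂ → ℂ := fun x ω => x 0 + x 1 * ω + x 2 * ω ^ 2 + x 3 * ω ^ 3
    let x₁ : Fin 4 → ℂ := ![9 / 2, 9, 1 / 2, 1]
    let x₂ : Fin 4 → ℂ := ![3 / 2, 3 + 4 * I, 3 / 2 + 8 * I, 3]
    let x₃ : Fin 4 → ℂ := ![3 / 2, 3 - 4 * I, 3 / 2 - 8 * I, 3]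
    let x₄ : Fin 4 → ℂ := ![9, 9 / 2, 1, 1 / 2]
    ∀ ω : ℂ, ‖ω‖ = 1 →
      ‖f x₁ ω‖ ^ 2 = ‖f x₂ ω‖ ^ 2 ∧
      ‖f x₂ ω‖ ^ 2 = ‖f x₃ ω‖ ^ 2 ∧
      ‖f x₃ ω‖ ^ 2 = ‖f x₄ ω‖ ^ 2 := by
  intro f x₁ x₂ x₃ x₄ ω hω
  have factor₁ : f x₁ ω = (ω + 1 / 2) * (ω - 3 * I) * (ω + 3 * I) := by
    simp only [f, x₁, Matrix.cons_val]; ring_nf; simp only [I_sq]; ring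
  have factor₂ : f x₂ ω = -I * (ω + 1 / 2) * (1 - -3 * I * ω) * (ω + 3 * I) := by
    simp only [f, x₂, Matrix.cons_val]; ring_nf; simp only [I_sq, I_pow_three]; ring
  have factor₃ : f x₃ ω = I * (ω + 1 / 2) * (1 - 3 * I * ω) * (ω - 3 * I) := by
    simp only [f, x₃, Matrix.cons_val]; ring_nf; simp only [I_sq, I_pow_three]; ring
  have factor₄ : f x₄ ω = (1 - -(1 / 2) * ω) * (ω - 3 * I) * (ω + 3 * I) := by
    simp only [f, x₄, Matrix.cons_val]; ring_nf; simp only [I_sq]; ring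
  have reflect := norm_one_sub_mul_eq_norm_sub_conj hω
  have norm₂ : ‖f x₂ ω‖ = ‖f x₁ ω‖ := by
    rw [factor₁, factor₂, norm_mul, norm_mul, norm_mul, reflect]
    simp [map_ofNat]
  have norm₃ : ‖f x₃ ω‖ = ‖f x₁ ω‖ := by
    rw [factor₁, factor₃, norm_mul, norm_mul, norm_mul, reflect]
    simp [map_ofNat, mul_right_comm]
  have norm₄ : ‖f x₄ ω‖ = ‖f x₁ ω‖ := by
    rw [factor₁, factor₄, norm_mul, norm_mul, reflect]
    simp [map_ofNat]
  simp only [norm₂, norm₃, norm₄, and_self]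
end
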